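/- arXiv:0906.3840 — 4 statements merged into one kernel-verified Lean document; each statement's English description precedes it below -/
import Mathlib

section
/- Let n ≥ 2 and let A be an n×n matrix over a commutative ring R. Then det(A) · det(A_{2..n−1, 2..n−1}) = det(A_{1..n−1, 1..n−1}) · det(A_{2..n, 2..n}) − det(A_{2..n, 1..n−1}) · det(A_{1..n−1, 2..n}). (Here, when n = 2, the determinant of the empty 0×0 matrix A_{2..1,2..1} is 1.) This is the Desnanot–Jacobi condensation identity on which Dodgson's method is based. -/
/-!
Let `B` be the identity matrix with its first and last columns replaced by the corresponding
columns of `adjugate A`. Then `det B` is the `2 × 2` corner minor of the adjugate, which is the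
right-hand side of the identity (the cofactor signs cancel), while `A * B` is `A` with its first
and last columns replaced by `det A • e₁` and `det A • eₙ`, whose determinant is `(det A)²`
times the determinant of the interior. Hence `det A · rhs = det A · (det A · det interior)`.
For the generic matrix over `ℤ[x_ij]` the factor `det A` is a nonzero element of a domain and
cancels; specialising the variables gives the identity over every commutative ring.
-/

/-- The contiguous `k × k` submatrix of `A` whose upper-left corner is the
(0-based) entry `(i, j)`. -/
def block {R : Type*} [CommRing R] {n : ℕ} (A : Matrix (Fin n) (Fin n) R)
    (i j k : ℕ) (hi : i + k ≤ n) (hj : j + k ≤ n) : Matrix (Fin k) (Fin k) R :=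
  Matrix.of fun r c => A ⟨i + r.1, by omega⟩ ⟨j + c.1, by omega⟩

open Matrix

section
variable {N R : Type*} [Fintype N] [DecidableEq N] [CommRing R]

theorem det_one_updateCol_updateCol {p q : N} (hpq : p ≠ q) (v w : N → R) :
    (((1 : Matrix N N R).updateCol p v).updateCol q w).det = v p * w q - v q * w p := by
  -- a rank-two perturbation of `1`: `det_one_add_mul_comm` reduces it to a `2 × 2` determinant
  let U : Matrix N (Fin 2) R :=
    of fun i => ![v i - (1 : Matrix N N R) i p, w i - (1 : Matrix N N R) i q]
  let V : Matrix (Fin 2) N R := of ![(1 : Matrix N N R) p, (1 : Matrix N N R) q]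
  have hUV : ((1 : Matrix N N R).updateCol p v).updateCol q w = 1 + U * V := by
    ext i j
    simp only [updateCol_apply, Matrix.add_apply, mul_apply, Fin.sum_univ_two, U, V, of_apply,
      cons_val_zero, cons_val_one]
    split_ifs <;> simp_all [one_apply, eq_comm]
  rw [hUV, det_one_add_mul_comm, det_fin_two]
  simp [U, V, vecMul, dotProduct, one_apply, hpq, hpq.symm]
  ring

theorem mul_updateCol_adjugate (A : Matrix N N R) (p q : N) :
    A * ((1 : Matrix N N R).updateCol p (fun i => adjugate A i p)).updateCol q
        (fun i => adjugate A i q)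
      = (A.updateCol p (A.det • Pi.single p 1)).updateCol q (A.det • Pi.single q 1) := by
  have hcol (j : N) : A *ᵥ (fun i => adjugate A i j) = A.det • Pi.single j 1 := by
    ext i
    simpa [mulVec, dotProduct, mul_apply, one_apply, Pi.single_apply, eq_comm] using
      congrFun (congrFun (mul_adjugate A) i) j
  rw [mul_updateCol, mul_updateCol, mul_one, hcol, hcol]

theorem det_mul_adjugate_minor (A : Matrix N N R) {p q : N} (hpq : p ≠ q) :
    A.det * (adjugate A p p * adjugate A q q - adjugate A q p * adjugate A p q)
      = A.det ^ 2 * ((A.updateCol p (Pi.single p 1)).updateCol q (Pi.single q 1)).det := by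
  calc A.det * (adjugate A p p * adjugate A q q - adjugate A q p * adjugate A p q)
      = A.det * (((1 : Matrix N N R).updateCol p (fun i => adjugate A i p)).updateCol q
          (fun i => adjugate A i q)).det := by rw [det_one_updateCol_updateCol hpq]
    _ = ((A.updateCol p (A.det • Pi.single p 1)).updateCol q (A.det • Pi.single q 1)).det := by
      rw [← mul_updateCol_adjugate, det_mul]
    _ = A.det ^ 2 * ((A.updateCol p (Pi.single p 1)).updateCol q (Pi.single q 1)).det := by
      rw [det_updateCol_smul, updateCol_comm _ hpq, det_updateCol_smul, updateCol_comm _ hpq.symm]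
      ring

end

section
variable {R : Type*} [CommRing R]

theorem det_updateCol_single_self {k : ℕ} (A : Matrix (Fin (k + 1)) (Fin (k + 1)) R)
    (j : Fin (k + 1)) :
    (A.updateCol j (Pi.single j 1)).det = (A.submatrix j.succAbove j.succAbove).det := by
  rw [det_succ_column _ j, Fintype.sum_eq_single j fun i hij => by simp [hij]]
  simp

theorem det_updateCol_zero_updateCol_last {m : ℕ} (A : Matrix (Fin (m + 2)) (Fin (m + 2)) R) :
    ((A.updateCol 0 (Pi.single 0 1)).updateCol (Fin.last _) (Pi.single (Fin.last _) 1)).det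
      = (A.submatrix (fun i : Fin m => i.succ.castSucc) (fun i => i.succ.castSucc)).det := by
  have hsub : (A.updateCol 0 (Pi.single 0 1)).submatrix Fin.castSucc Fin.castSucc
      = (A.submatrix Fin.castSucc Fin.castSucc).updateCol 0 (Pi.single 0 1) := by
    ext i j
    rcases eq_or_ne j 0 with rfl | hj
    · simp [Pi.single_apply]
    · simp [hj]
  rw [det_updateCol_single_self, Fin.succAbove_last, hsub, det_updateCol_single_self,
    Fin.succAbove_zero, submatrix_submatrix]
  rfl

theorem adjugate_corner_minor_fin {m : ℕ} (A : Matrix (Fin (m + 2)) (Fin (m + 2)) R) :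
    adjugate A 0 0 * adjugate A (Fin.last _) (Fin.last _)
        - adjugate A (Fin.last _) 0 * adjugate A 0 (Fin.last _)
      = (A.submatrix Fin.castSucc Fin.castSucc).det * (A.submatrix Fin.succ Fin.succ).det
        - (A.submatrix Fin.succ Fin.castSucc).det * (A.submatrix Fin.castSucc Fin.succ).det := by
  have hsign : (-1 : R) ^ (m + 1 + (m + 1)) = 1 := Even.neg_one_pow ⟨m + 1, rfl⟩
  simp only [adjugate_fin_succ_eq_det_submatrix, Fin.succAbove_zero, Fin.succAbove_last,
    Fin.val_zero, Fin.val_last, zero_add, add_zero, pow_zero, one_mul]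
  linear_combination
    ((A.submatrix Fin.castSucc Fin.castSucc).det * (A.submatrix Fin.succ Fin.succ).det
      - (A.submatrix Fin.succ Fin.castSucc).det * (A.submatrix Fin.castSucc Fin.succ).det) * hsign

theorem det_mul_desnanot_jacobi {m : ℕ} (A : Matrix (Fin (m + 2)) (Fin (m + 2)) R) :
    A.det * (A.det
        * (A.submatrix (fun i : Fin m => i.succ.castSucc) (fun i => i.succ.castSucc)).det)
      = A.det * ((A.submatrix Fin.castSucc Fin.castSucc).det * (A.submatrix Fin.succ Fin.succ).det
        - (A.submatrix Fin.succ Fin.castSucc).det * (A.submatrix Fin.castSucc Fin.succ).det) := by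
  have h0last : (0 : Fin (m + 2)) ≠ Fin.last _ := Fin.last_pos.ne
  rw [← adjugate_corner_minor_fin, det_mul_adjugate_minor A h0last,
    det_updateCol_zero_updateCol_last]
  ring

theorem desnanot_jacobi_fin {m : ℕ} (A : Matrix (Fin (m + 2)) (Fin (m + 2)) R) :
    A.det * (A.submatrix (fun i : Fin m => i.succ.castSucc) (fun i => i.succ.castSucc)).det
      = (A.submatrix Fin.castSucc Fin.castSucc).det * (A.submatrix Fin.succ Fin.succ).det
        - (A.submatrix Fin.succ Fin.castSucc).det * (A.submatrix Fin.castSucc Fin.succ).det := by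
  have hX := mul_left_cancel₀ (det_mvPolynomialX_ne_zero _ ℤ)
    (det_mul_desnanot_jacobi (mvPolynomialX (Fin (m + 2)) (Fin (m + 2)) ℤ))
  have hA := congrArg (MvPolynomial.eval₂Hom (Int.castRingHom R) fun p => A p.1 p.2) hX
  simpa only [map_sub, map_mul, RingHom.map_det, RingHom.mapMatrix_apply, ← submatrix_map,
    MvPolynomial.coe_eval₂Hom, mvPolynomialX_map_eval₂] using hA

theorem block_eq_submatrix {n k : ℕ} (A : Matrix (Fin n) (Fin n) R) {i j : ℕ} (hi : i + k ≤ n)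
    (hj : j + k ≤ n) {f g : Fin k → Fin n} (hf : ∀ r, (f r : ℕ) = i + r)
    (hg : ∀ c, (g c : ℕ) = j + c) :
    block A i j k hi hj = A.submatrix f g := by
  ext r c
  simp only [block, of_apply, submatrix_apply]
  congr 1 <;> apply Fin.ext <;> simp [hf, hg]

end

/-- **Desnanot–Jacobi condensation identity.**  For an `n × n` matrix `A` (`n ≥ 2`)
over a commutative ring,
`det A · det A_{2..n-1,2..n-1} = det A_{1..n-1,1..n-1} · det A_{2..n,2..n}
  − det A_{2..n,1..n-1} · det A_{1..n-1,2..n}`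
(indices 1-based; here 0-based, so the interior is the block starting at `(1,1)`
of size `n-2`, and when `n = 2` its determinant is the empty determinant `1`). -/
theorem desnanot_jacobi {R : Type*} [CommRing R] {n : ℕ} (hn : 2 ≤ n)
    (A : Matrix (Fin n) (Fin n) R) :
    A.det * (block A 1 1 (n - 2) (by omega) (by omega)).det
      = (block A 0 0 (n - 1) (by omega) (by omega)).det
          * (block A 1 1 (n - 1) (by omega) (by omega)).det
        - (block A 1 0 (n - 1) (by omega) (by omega)).det
          * (block A 0 1 (n - 1) (by omega) (by omega)).det := by
  obtain ⟨m, rfl⟩ : ∃ m, n = m + 2 := ⟨n - 2, by omega⟩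
  have hsucc (r : Fin (m + 1)) : (r.succ : ℕ) = 1 + r := by simp [add_comm]
  have hcast (r : Fin (m + 1)) : (r.castSucc : ℕ) = 0 + r := by simp
  have hint (r : Fin m) : (r.succ.castSucc : ℕ) = 1 + r := by simp [add_comm]
  erw [block_eq_submatrix A _ _ hint hint, block_eq_submatrix A _ _ hcast hcast,
    block_eq_submatrix A _ _ hsucc hsucc, block_eq_submatrix A _ _ hsucc hcast,
    block_eq_submatrix A _ _ hcast hsucc]
  exact desnanot_jacobi_fin A
end

section
/- Let n ≥ 2 and let A be an n×n matrix over a commutative ring R. Fix rows p < q and columns u < v (all between 1 and n). Let m(r,c) denote the (r,c) minor of A, i.e. the determinant of A with row r and column c deleted. Then m(p,u) · m(q,v) − m(p,v) · m(q,u) = det(A) · det(B), where B is the (n−2)×(n−2) submatrix of A obtained by deleting rows p and q and columns u and v. In particular no sign correction is needed when minors (rather than cofactors) are used. -/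
/-- `skip a x` is the `x`-th natural number (in increasing order) different from `a`. -/
def skip (a x : ℕ) : ℕ := if x < a then x else x + 1

theorem skip_le (a x : ℕ) : skip a x ≤ x + 1 := by unfold skip; split <;> omega

/-- The `(i, j)` minor of `A`: the determinant of the `(n-1) × (n-1)` submatrix
obtained from `A` by deleting row `i` and column `j` (no sign attached). -/
def dmMinor {R : Type*} [CommRing R] {n : ℕ} (A : Matrix (Fin n) (Fin n) R)
    (i j : Fin n) : R :=
  (Matrix.of fun r c : Fin (n - 1) =>
    A ⟨skip i.1 r.1, by have := skip_le i.1 r.1; omega⟩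
      ⟨skip j.1 c.1, by have := skip_le j.1 c.1; omega⟩).det

/-!
Let `D` be `A` with rows `p, q` replaced by the unit rows `e_u, e_v`, and `P` the identity with
rows `p, q` replaced by rows `u, v` of `adj A`. Then `P * A` is `D` with those two rows scaled by
`det A`, and `det P` is the `2 × 2` minor of `adj A` on rows `u, v` and columns `p, q`; hence
`det A * (det A * det D) = det A * (that minor)`. Cancelling `det A` is legitimate for the generic
matrix over `ℤ[X_ij]`, so the cofactor identity `det A * det D = (minor of adj A)` holds for every
matrix. Laplace expansion writes `det D` and the entries of `adj A` as signed minors; for `p < q`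
and `u < v` the signs on the two sides agree.
-/

open Matrix

theorem Pi.single_comp_of_injective {ι κ β : Type*} [DecidableEq ι] [DecidableEq κ] [Zero β]
    {g : κ → ι} (hg : Function.Injective g) (j : κ) (x : β) :
    (Pi.single (g j) x : ι → β) ∘ g = Pi.single j x :=
  Function.update_comp_eq_of_injective (0 : ι → β) hg j x

theorem Matrix.submatrix_updateRow_of_injective {l m n o α : Type*} [DecidableEq l]
    [DecidableEq m] {f : l → m} (hf : Function.Injective f) (A : Matrix m n α) (i : l)
    (b : n → α) (g : o → n) :
    (A.updateRow (f i) b).submatrix f g = (A.submatrix f g).updateRow i (b ∘ g) := by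
  ext j k
  by_cases hj : j = i
  · subst hj; simp
  · simp [updateRow_apply, hf.eq_iff, hj]

namespace Matrix

section

variable {n R : Type*} [Fintype n] [DecidableEq n] [CommRing R]

theorem det_one_updateRow_updateRow {p q : n} (hpq : p ≠ q) (r s : n → R) :
    (((1 : Matrix n n R).updateRow p r).updateRow q s).det = r p * s q - r q * s p := by
  -- a rank-two perturbation of `1`, so `det (1 + U * V) = det (1 + V * U)` is a `2 × 2` determinant
  let U : Matrix n (Fin 2) R := (1 : Matrix n n R).submatrix (Equiv.refl n) ![p, q]
  let V : Matrix (Fin 2) n R := of ![r - Pi.single p 1, s - Pi.single q 1]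
  have hUV : ((1 : Matrix n n R).updateRow p r).updateRow q s = 1 + U * V := by
    ext i j
    simp only [U, V, updateRow_apply, add_apply, mul_apply, Fin.sum_univ_two, submatrix_apply,
      one_apply, Pi.sub_apply, Pi.single_apply, of_apply, Equiv.coe_refl, id_eq, cons_val_zero,
      cons_val_one, ite_mul, one_mul, zero_mul]
    grind
  rw [hUV, det_one_add_mul_comm, mul_submatrix_one, det_fin_two]
  simp [V, hpq, hpq.symm]

theorem adjugate_row_vecMul (A : Matrix n n R) (i : n) :
    adjugate A i ᵥ* A = A.det • Pi.single i 1 := by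
  change (adjugate A * A) i = _
  ext j
  simp [adjugate_mul, one_eq_pi_single]

theorem det_mul_det_mul_det_updateRow_single_updateRow_single (A : Matrix n n R) {p q : n}
    (hpq : p ≠ q) (u v : n) :
    A.det * (A.det * ((A.updateRow p (Pi.single u 1)).updateRow q (Pi.single v 1)).det)
      = A.det * (adjugate A u p * adjugate A v q - adjugate A u q * adjugate A v p) := by
  have hPA : ((1 : Matrix n n R).updateRow p (adjugate A u)).updateRow q (adjugate A v) * A
      = (A.updateRow p (A.det • Pi.single u 1)).updateRow q (A.det • Pi.single v 1) := by
    rw [updateRow_mul, updateRow_mul, Matrix.one_mul, adjugate_row_vecMul, adjugate_row_vecMul]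
  calc A.det * (A.det * ((A.updateRow p (Pi.single u 1)).updateRow q (Pi.single v 1)).det)
      = ((A.updateRow p (A.det • Pi.single u 1)).updateRow q (A.det • Pi.single v 1)).det := by
        rw [det_updateRow_smul, updateRow_comm _ hpq (A.det • _), det_updateRow_smul,
          updateRow_comm _ hpq.symm]
    _ = _ := by rw [← hPA, det_mul, det_one_updateRow_updateRow hpq, mul_comm]

theorem det_mul_det_updateRow_single_updateRow_single (A : Matrix n n R) {p q : n}
    (hpq : p ≠ q) (u v : n) :
    A.det * ((A.updateRow p (Pi.single u 1)).updateRow q (Pi.single v 1)).det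
      = adjugate A u p * adjugate A v q - adjugate A u q * adjugate A v p := by
  let X := mvPolynomialX n n ℤ
  have hX : X.det * ((X.updateRow p (Pi.single u 1)).updateRow q (Pi.single v 1)).det
      = adjugate X u p * adjugate X v q - adjugate X u q * adjugate X v p :=
    mul_left_cancel₀ (det_mvPolynomialX_ne_zero n ℤ)
      (det_mul_det_mul_det_updateRow_single_updateRow_single X hpq u v)
  let f := MvPolynomial.aeval (R := ℤ) fun ij : n × n => A ij.1 ij.2
  have hfX : f.mapMatrix X = A := mvPolynomialX_mapMatrix_aeval ℤ A
  have hf_adjugate (i j : n) : f (X.adjugate i j) = A.adjugate i j := by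
    rw [← hfX, ← AlgHom.map_adjugate]; rfl
  have hf_single (i : n) : f ∘ Pi.single i 1 = Pi.single i 1 := by
    ext j; simp [Pi.single_apply, apply_ite f]
  have hA := congrArg f hX
  simp only [map_mul, map_sub, AlgHom.map_det, AlgHom.mapMatrix_apply, map_updateRow, hf_single,
    hf_adjugate] at hA
  rwa [← AlgHom.mapMatrix_apply, hfX] at hA

end

section

variable {R : Type*} [CommRing R] {m : ℕ}

theorem det_updateRow_single_updateRow_single_succAbove
    (A : Matrix (Fin (m + 2)) (Fin (m + 2)) R) (q v : Fin (m + 2)) (p u : Fin (m + 1)) :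
    ((A.updateRow (q.succAbove p) (Pi.single (v.succAbove u) 1)).updateRow q
        (Pi.single v 1)).det
      = (-1) ^ (q + v : ℕ) * ((-1) ^ (p + u : ℕ) *
          (A.submatrix (q.succAbove ∘ p.succAbove) (v.succAbove ∘ u.succAbove)).det) := by
  rw [← adjugate_apply, adjugate_fin_succ_eq_det_submatrix,
    submatrix_updateRow_of_injective Fin.succAbove_right_injective,
    Pi.single_comp_of_injective Fin.succAbove_right_injective, ← adjugate_apply,
    adjugate_fin_succ_eq_det_submatrix, submatrix_submatrix]

theorem desnanot_jacobi (A : Matrix (Fin (m + 2)) (Fin (m + 2)) R)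
    (q v : Fin (m + 2)) (p u : Fin (m + 1)) (hp : p.castSucc < q) (hu : u.castSucc < v) :
    (A.submatrix p.castSucc.succAbove u.castSucc.succAbove).det
        * (A.submatrix q.succAbove v.succAbove).det
      - (A.submatrix p.castSucc.succAbove v.succAbove).det
        * (A.submatrix q.succAbove u.castSucc.succAbove).det
      = A.det * (A.submatrix (q.succAbove ∘ p.succAbove) (v.succAbove ∘ u.succAbove)).det := by
  have hD := A.det_updateRow_single_updateRow_single_succAbove q v p u
  rw [Fin.succAbove_of_castSucc_lt q p hp, Fin.succAbove_of_castSucc_lt v u hu] at hD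
  have key := A.det_mul_det_updateRow_single_updateRow_single hp.ne u.castSucc v
  simp only [hD, adjugate_fin_succ_eq_det_submatrix, Fin.val_castSucc] at key
  have hsign : (-1 : R) ^ (p + u : ℕ) * (-1) ^ (q + v : ℕ)
      = (-1) ^ (q + u : ℕ) * (-1) ^ (p + v : ℕ) := by
    ring
  refine ((isUnit_neg_one.pow _).mul (isUnit_neg_one.pow _)).mul_left_cancel
    (a := (-1 : R) ^ (p + u : ℕ) * (-1) ^ (q + v : ℕ)) ?_
  generalize (A.submatrix p.castSucc.succAbove v.succAbove).det = a at key ⊢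
  generalize (A.submatrix q.succAbove u.castSucc.succAbove).det = b at key ⊢
  linear_combination -key - a * b * hsign

end

end Matrix

theorem Fin.val_succAbove_eq_skip {m : ℕ} (i : Fin (m + 1)) (r : Fin m) :
    (i.succAbove r : ℕ) = skip i r := by
  rw [Fin.succAbove, skip]
  split_ifs <;> simp_all [Fin.lt_def]

theorem dmMinor_eq_det_submatrix {R : Type*} [CommRing R] {m : ℕ}
    (A : Matrix (Fin (m + 1)) (Fin (m + 1)) R) (i j : Fin (m + 1)) :
    dmMinor A i j = (A.submatrix i.succAbove j.succAbove).det := by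
  unfold dmMinor
  congr 1
  ext r c
  simp only [of_apply, submatrix_apply]
  congr 1 <;> ext <;> simp [Fin.val_succAbove_eq_skip]

/-- **Sign-free 2×2 Jacobi identity for minors.**  For `n ≥ 2`, rows `p < q` and
columns `u < v` of an `n × n` matrix `A` over a commutative ring,
`m(p,u)·m(q,v) − m(p,v)·m(q,u) = det A · det B`, where `m(r,c)` is the `(r,c)`
minor of `A` and `B` is the `(n-2) × (n-2)` submatrix of `A` obtained by
deleting rows `p, q` and columns `u, v`. -/
theorem jacobi_two_by_two_minors {R : Type*} [CommRing R] {n : ℕ}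
    (A : Matrix (Fin n) (Fin n) R) (p q u v : Fin n)
    (hpq : p.1 < q.1) (huv : u.1 < v.1) :
    dmMinor A p u * dmMinor A q v - dmMinor A p v * dmMinor A q u
      = A.det *
        (Matrix.of fun r c : Fin (n - 2) =>
          A ⟨skip q.1 (skip p.1 r.1), by
                have := skip_le p.1 r.1; have := skip_le q.1 (skip p.1 r.1); omega⟩
            ⟨skip v.1 (skip u.1 c.1), by
                have := skip_le u.1 c.1; have := skip_le v.1 (skip u.1 c.1); omega⟩).det := by
  obtain ⟨m, rfl⟩ : ∃ m, n = m + 2 := ⟨n - 2, by omega⟩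
  obtain ⟨p, rfl⟩ : ∃ p' : Fin (m + 1), p'.castSucc = p :=
    ⟨_, Fin.castSucc_castPred p (Fin.ne_last_of_lt hpq)⟩
  obtain ⟨u, rfl⟩ : ∃ u' : Fin (m + 1), u'.castSucc = u :=
    ⟨_, Fin.castSucc_castPred u (Fin.ne_last_of_lt huv)⟩
  simp only [dmMinor_eq_det_submatrix]
  refine (A.desnanot_jacobi q v p u hpq huv).trans (congrArg (fun B => A.det * det B) ?_)
  ext r c
  simp only [of_apply, submatrix_apply, Function.comp_apply]
  congr 1 <;> ext <;> simp [Fin.val_succAbove_eq_skip]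
end

section
/- (Jacobi's Theorem.) Let A be an n×n matrix over a commutative ring R, let 1 ≤ m ≤ n, and let i_1 < i_2 < ... < i_m and j_1 < j_2 < ... < j_m be rows and columns of A. Let M' be the m×m matrix whose (s,t) entry is the (i_s, j_t) cofactor of A, and let M* be the (n−m)×(n−m) submatrix of A obtained by deleting rows i_1, ..., i_m and columns j_1, ..., j_m. Then det(M') = (det A)^{m−1} · det(M*) · (−1)^{Σ_{ℓ=1}^{m} (i_ℓ + j_ℓ)}. -/
open Equiv Matrix
namespace JacobiAux

lemma le_apply {n : ℕ} {f : Fin n → Fin n} (hf : StrictMono f) : ∀ x : Fin n, x.1 ≤ (f x).1 := by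
  have H : ∀ t : ℕ, ∀ x : Fin n, x.1 = t → t ≤ (f x).1 := by
    intro t
    induction t with
    | zero => intro x _; exact Nat.zero_le _
    | succ t ih =>
      intro x hx
      have hlt : t < n := by omega
      have h1 : (⟨t, hlt⟩ : Fin n) < x := by rw [Fin.lt_def]; simp; omega
      have h2 := hf h1
      have h3 := ih ⟨t, hlt⟩ rfl
      rw [Fin.lt_def] at h2
      omega
  exact fun x => H x.1 x rfl

lemma eq_id {n : ℕ} {f : Fin n → Fin n} (hf : StrictMono f) (hs : Function.Surjective f) :
    ∀ x, f x = x := by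
  have H : ∀ t : ℕ, ∀ x : Fin n, x.1 < t → f x = x := by
    intro t
    induction t with
    | zero => intro x hx; omega
    | succ t ih =>
      intro x hx
      rcases Nat.lt_or_ge x.1 t with h | h
      · exact ih x h
      · have hxt : x.1 = t := by omega
        obtain ⟨y, hy⟩ := hs x
        rcases lt_trichotomy y x with h2 | h2 | h2
        · have := ih y (by rw [Fin.lt_def] at h2; omega)
          rw [this] at hy
          exact absurd hy (ne_of_lt h2)
        · rw [h2] at hy; exact hy
        · have h3 := hf h2
          have h4 := le_apply hf x
          rw [hy, Fin.lt_def] at h3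
          omega
  exact fun x => H (x.1 + 1) x (Nat.lt_succ_self _)

lemma sign_shuffle (m : ℕ) : ∀ {k n : ℕ} (_ : m + k = n)
    (i : Fin m → Fin n) (er : Fin k → Fin n), StrictMono i → StrictMono er →
    (∀ x, (∃ r, er r = x) ↔ ∀ s, i s ≠ x) →
    ∀ (ρ : Equiv.Perm (Fin n)),
    (∀ s : Fin m, ρ ⟨s.1, by have := s.2; omega⟩ = i s) →
    (∀ r : Fin k, ρ ⟨m + r.1, by have := r.2; omega⟩ = er r) →
    Equiv.Perm.sign ρ = (-1) ^ (∑ s : Fin m, ((i s).1 + s.1)) := by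
  induction m with
  | zero =>
    intro k n hn i er hi her hcomp ρ hρ₁ hρ₂
    have hk : k = n := by omega
    subst hk
    have hsurj : Function.Surjective er := fun x => (hcomp x).2 (fun s => s.elim0)
    have hid := eq_id her hsurj
    have hρ : ρ = 1 := by
      ext x
      have h1 := hρ₂ x
      simp only [Nat.zero_add, Fin.eta] at h1
      rw [h1, hid x, Perm.one_apply]
    rw [hρ]
    simp
  | succ m ih =>
    intro k n hn i er hi her hcomp ρ hρ₁ hρ₂
    obtain ⟨n', rfl⟩ : ∃ n', n = n' + 1 := ⟨m + k, by omega⟩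
    set a := i 0 with ha
    have hρ0 : ρ 0 = a := by simpa using hρ₁ 0
    set τ := a.cycleRange * ρ with hτdef
    have hτ0 : τ 0 = 0 := by
      rw [hτdef, Perm.mul_apply, hρ0, Fin.cycleRange_self]
    set ρ' := (Equiv.Perm.decomposeFin τ).2 with hρ'def
    have hsymmτ : Equiv.Perm.decomposeFin.symm (Equiv.Perm.decomposeFin τ) = τ :=
      Equiv.symm_apply_apply _ _
    have h1 : (Equiv.Perm.decomposeFin τ).1 = 0 := by
      calc (Equiv.Perm.decomposeFin τ).1
          = Equiv.Perm.decomposeFin.symm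
              ((Equiv.Perm.decomposeFin τ).1, (Equiv.Perm.decomposeFin τ).2) 0 :=
            (Equiv.Perm.decomposeFin_symm_apply_zero _ _).symm
        _ = τ 0 := by rw [hsymmτ]
        _ = 0 := hτ0
    have hτeq : τ = Equiv.Perm.decomposeFin.symm (0, ρ') := by
      conv_lhs => rw [← hsymmτ]
      rw [← h1]
    have hτsucc : ∀ x : Fin n', τ x.succ = (ρ' x).succ := by
      intro x
      rw [hτeq, Equiv.Perm.decomposeFin_symm_apply_succ]
      simp
    have hsign1 : Equiv.Perm.sign τ = Equiv.Perm.sign ρ' := by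
      rw [hτeq, Equiv.Perm.decomposeFin.symm_sign, if_pos rfl, one_mul]
    have hsign2 : Equiv.Perm.sign ρ = (-1) ^ a.1 * Equiv.Perm.sign ρ' := by
      have : Equiv.Perm.sign τ = (-1) ^ a.1 * Equiv.Perm.sign ρ := by
        rw [hτdef, Equiv.Perm.sign_mul, Fin.sign_cycleRange]
      rw [hsign1] at this
      have h2 : ((-1 : ℤˣ) ^ a.1) * ((-1 : ℤˣ) ^ a.1) = 1 := by
        rw [← pow_add]
        exact Even.neg_one_pow ⟨a.1, rfl⟩
      calc Equiv.Perm.sign ρ = ((-1) ^ a.1 * (-1) ^ a.1) * Equiv.Perm.sign ρ := by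
            rw [h2, one_mul]
        _ = (-1) ^ a.1 * Equiv.Perm.sign ρ' := by rw [mul_assoc, ← this]
    -- data for the smaller problem
    have hane : ∀ s : Fin m, i s.succ ≠ a := fun s h => Fin.succ_ne_zero s (hi.injective h)
    have herne : ∀ r, er r ≠ a := fun r h => (hcomp (er r)).1 ⟨r, rfl⟩ 0 h.symm
    have hcycne0 : ∀ v : Fin (n' + 1), v ≠ a → a.cycleRange v ≠ 0 := by
      intro v hv h0
      exact hv (a.cycleRange.injective (by rw [h0, Fin.cycleRange_self]))
    set i' : Fin m → Fin n' := fun s => (a.cycleRange (i s.succ)).pred (hcycne0 _ (hane s))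
      with hi'def
    set er' : Fin k → Fin n' := fun r => (a.cycleRange (er r)).pred (hcycne0 _ (herne r))
      with her'def
    have hkey : ∀ (v : Fin (n' + 1)) (h0 : a.cycleRange v ≠ 0),
        a.succAbove ((a.cycleRange v).pred h0) = v := by
      intro v h0
      have h := Fin.cycleRange_symm_succ a ((a.cycleRange v).pred h0)
      rw [Fin.succ_pred, Equiv.symm_apply_apply] at h
      exact h.symm
    have hia : ∀ s, a.succAbove (i' s) = i s.succ := fun s => hkey _ _
    have hera : ∀ r, a.succAbove (er' r) = er r := fun r => hkey _ _
    have hsucci' : ∀ s, (i' s).succ = a.cycleRange (i s.succ) := fun s => Fin.succ_pred _ _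
    have hsuccer' : ∀ r, (er' r).succ = a.cycleRange (er r) := fun r => Fin.succ_pred _ _
    have hi' : StrictMono i' := by
      intro s t h
      have h2 : i s.succ < i t.succ := hi (Fin.succ_lt_succ_iff.mpr h)
      rw [← hia s, ← hia t] at h2
      exact Fin.succAbove_lt_succAbove_iff.mp h2
    have her' : StrictMono er' := by
      intro s t h
      have h2 : er s < er t := her h
      rw [← hera s, ← hera t] at h2
      exact Fin.succAbove_lt_succAbove_iff.mp h2
    have hcomp' : ∀ x : Fin n', (∃ r, er' r = x) ↔ ∀ s, i' s ≠ x := by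
      intro x
      constructor
      · rintro ⟨r, rfl⟩ s h
        exact (hcomp (er r)).1 ⟨r, rfl⟩ s.succ (by rw [← hia s, ← hera r, h])
      · intro h
        have h2 : ∀ s : Fin (m + 1), i s ≠ a.succAbove x := by
          intro s
          refine Fin.cases ?_ (fun t => ?_) s
          · exact fun hh => Fin.ne_succAbove a x (ha ▸ hh)
          · intro hh
            exact h t (Fin.succAbove_right_injective (by rw [hia t, hh]))
        obtain ⟨r, hr⟩ := (hcomp (a.succAbove x)).2 h2
        exact ⟨r, Fin.succAbove_right_injective (p := a) (by rw [hera r, hr])⟩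
    have hρ'₁ : ∀ s : Fin m, ρ' ⟨s.1, by have := s.2; omega⟩ = i' s := by
      intro s
      apply Fin.succ_injective
      have hx : ((⟨s.1, by have := s.2; omega⟩ : Fin n')).succ
          = (⟨s.1 + 1, by have := s.2; omega⟩ : Fin (n' + 1)) := rfl
      rw [← hτsucc, hx, hτdef, Perm.mul_apply]
      have h3 : ρ (⟨s.1 + 1, by have := s.2; omega⟩ : Fin (n' + 1)) = i s.succ := hρ₁ s.succ
      rw [h3, ← hsucci']
    have hρ'₂ : ∀ r : Fin k, ρ' ⟨m + r.1, by have := r.2; omega⟩ = er' r := by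
      intro r
      apply Fin.succ_injective
      have hx : ((⟨m + r.1, by have := r.2; omega⟩ : Fin n')).succ
          = (⟨m + 1 + r.1, by have := r.2; omega⟩ : Fin (n' + 1)) := by
        apply Fin.ext; simp; omega
      rw [← hτsucc, hx, hτdef, Perm.mul_apply]
      have h3 : ρ (⟨m + 1 + r.1, by have := r.2; omega⟩ : Fin (n' + 1)) = er r := hρ₂ r
      rw [h3, ← hsuccer']
    have hIH := ih (show m + k = n' by omega) i' er' hi' her' hcomp' ρ' hρ'₁ hρ'₂
    have hval : ∀ s : Fin m, (i s.succ).1 = (i' s).1 + 1 := by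
      intro s
      have hgt : a < i s.succ := hi (Fin.succ_pos s)
      have h4 : (i' s).succ = i s.succ := by rw [hsucci', Fin.cycleRange_of_gt hgt]
      rw [← h4, Fin.val_succ]
    have hexp : ∑ s : Fin (m + 1), ((i s).1 + s.1)
        = a.1 + ((∑ s : Fin m, ((i' s).1 + s.1)) + 2 * m) := by
      rw [Fin.sum_univ_succ]
      simp only [Fin.val_zero, Fin.val_succ, add_zero]
      have h5 : ∀ s : Fin m, (i s.succ).1 + (s.1 + 1) = ((i' s).1 + s.1) + 2 := by
        intro s; rw [hval s]; omega
      rw [Finset.sum_congr rfl (fun s _ => h5 s), Finset.sum_add_distrib, Finset.sum_const,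
        Finset.card_univ, Fintype.card_fin, smul_eq_mul]
      ring
    rw [hsign2, hIH, hexp, pow_add, pow_add, pow_mul]
    norm_num

lemma star_id {R : Type*} [CommRing R] {n m k : ℕ} (A : Matrix (Fin n) (Fin n) R)
    (i j : Fin m → Fin n) (er ec : Fin k → Fin n)
    (eRow eCol : (Fin m ⊕ Fin k) ≃ Fin n)
    (hrow₁ : ∀ s, eRow (Sum.inl s) = i s) (hrow₂ : ∀ r, eRow (Sum.inr r) = er r)
    (hcol₁ : ∀ t, eCol (Sum.inl t) = j t) (hcol₂ : ∀ c, eCol (Sum.inr c) = ec c) :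
    A.det * ((A.adjugate.submatrix j i).det)
      = (((Equiv.Perm.sign (eCol.trans eRow.symm) : ℤ) : R))
          * (A.det ^ m * (A.submatrix er ec).det) := by
  classical
  set g : Equiv.Perm (Fin m ⊕ Fin k) := eCol.trans eRow.symm with hg
  -- the auxiliary matrix C
  set C : Matrix (Fin n) (Fin n) R := Matrix.of fun x y =>
    Sum.elim (fun t => A.adjugate x (i t)) (fun c => (1 : Matrix (Fin n) (Fin n) R) x (ec c))
      (eCol.symm y) with hC
  have hsym₁ : ∀ t, eCol.symm (j t) = Sum.inl t := by
    intro t; rw [← hcol₁ t, Equiv.symm_apply_apply]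
  have hsym₂ : ∀ c, eCol.symm (ec c) = Sum.inr c := by
    intro c; rw [← hcol₂ c, Equiv.symm_apply_apply]
  have hiinj : Function.Injective i := by
    intro s t h
    have : eRow (Sum.inl s) = eRow (Sum.inl t) := by rw [hrow₁, hrow₁, h]
    exact Sum.inl.inj (eRow.injective this)
  have hecinj : Function.Injective ec := by
    intro s t h
    have : eCol (Sum.inr s) = eCol (Sum.inr t) := by rw [hcol₂, hcol₂, h]
    exact Sum.inr.inj (eCol.injective this)
  have hadj : ∀ x w, ∑ z, A x z * A.adjugate z w = A.det * (1 : Matrix (Fin n) (Fin n) R) x w := by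
    intro x w
    rw [← Matrix.mul_apply, Matrix.mul_adjugate, Matrix.smul_apply, smul_eq_mul]
  have hone : ∀ x w, ∑ z, A x z * (1 : Matrix (Fin n) (Fin n) R) z w = A x w := by
    intro x w
    rw [← Matrix.mul_apply, Matrix.mul_one]
  -- determinant transfer for unequal reindexings
  have hdet2 : ∀ M : Matrix (Fin n) (Fin n) R,
      (M.submatrix eRow eCol).det = ((Equiv.Perm.sign g : ℤ) : R) * M.det := by
    intro M
    have hsub : M.submatrix eRow eCol = (M.submatrix eRow eRow).submatrix id g := by
      ext x y
      simp only [Matrix.submatrix_apply, id_eq, hg, Equiv.trans_apply, Equiv.apply_symm_apply]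
    rw [hsub, Matrix.det_permute', Matrix.det_submatrix_equiv_self]
  -- compute (A * C) reindexed
  have hAC : (A * C).submatrix eRow eCol
      = Matrix.fromBlocks (A.det • (1 : Matrix (Fin m) (Fin m) R)) (A.submatrix i ec)
          0 (A.submatrix er ec) := by
    ext x y
    cases x with
    | inl s =>
      cases y with
      | inl t =>
        simp only [Matrix.submatrix_apply, hrow₁, hcol₁, Matrix.fromBlocks_apply₁₁,
          Matrix.mul_apply, hC, Matrix.of_apply, hsym₁, Sum.elim_inl]
        rw [hadj]
        simp only [Matrix.smul_apply, Matrix.one_apply, smul_eq_mul]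
        by_cases h : s = t
        · subst h; simp
        · rw [if_neg (fun hh => h (hiinj hh)), if_neg h]
      | inr c =>
        simp only [Matrix.submatrix_apply, hrow₁, hcol₂, Matrix.fromBlocks_apply₁₂,
          Matrix.mul_apply, hC, Matrix.of_apply, hsym₂, Sum.elim_inr]
        rw [hone]
    | inr r =>
      cases y with
      | inl t =>
        simp only [Matrix.submatrix_apply, hrow₂, hcol₁, Matrix.fromBlocks_apply₂₁,
          Matrix.mul_apply, hC, Matrix.of_apply, hsym₁, Sum.elim_inl, Matrix.zero_apply]
        rw [hadj]
        have : er r ≠ i t := by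
          intro hh
          have : eRow (Sum.inr r) = eRow (Sum.inl t) := by rw [hrow₁, hrow₂, hh]
          simpa using eRow.injective this
        rw [Matrix.one_apply_ne this, mul_zero]
      | inr c =>
        simp only [Matrix.submatrix_apply, hrow₂, hcol₂, Matrix.fromBlocks_apply₂₂,
          Matrix.mul_apply, hC, Matrix.of_apply, hsym₂, Sum.elim_inr]
        rw [hone]
    -- end hAC
  have hCC : C.submatrix eCol eCol
      = Matrix.fromBlocks (A.adjugate.submatrix j i) 0
          (A.adjugate.submatrix ec i) (1 : Matrix (Fin k) (Fin k) R) := by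
    ext x y
    cases x with
    | inl s =>
      cases y with
      | inl t =>
        simp [hC, hcol₁, hsym₁]
      | inr c =>
        simp only [Matrix.submatrix_apply, hcol₁, hcol₂, Matrix.fromBlocks_apply₁₂,
          hC, Matrix.of_apply, hsym₂, Sum.elim_inr, Matrix.zero_apply]
        have : j s ≠ ec c := by
          intro hh
          have : eCol (Sum.inl s) = eCol (Sum.inr c) := by rw [hcol₁, hcol₂, hh]
          simpa using eCol.injective this
        exact Matrix.one_apply_ne this
    | inr r =>
      cases y with
      | inl t =>
        simp [hC, hcol₂, hcol₁, hsym₁]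
      | inr c =>
        simp only [Matrix.submatrix_apply, hcol₂, hC, Matrix.of_apply, hsym₂, Sum.elim_inr,
          Matrix.fromBlocks_apply₂₂]
        simp only [Matrix.one_apply, hecinj.eq_iff]
  have hdetC : C.det = (A.adjugate.submatrix j i).det := by
    rw [← Matrix.det_submatrix_equiv_self eCol C, hCC, Matrix.det_fromBlocks_zero₁₂,
      Matrix.det_one, mul_one]
  have hsg : ((Equiv.Perm.sign g : ℤ) : R) * ((Equiv.Perm.sign g : ℤ) : R) = 1 := by
    rw [← Int.cast_mul, ← Units.val_mul, Int.units_mul_self, Units.val_one, Int.cast_one]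
  have hmain : ((Equiv.Perm.sign g : ℤ) : R) * (A.det * C.det)
      = A.det ^ m * (A.submatrix er ec).det := by
    rw [← Matrix.det_mul, ← hdet2, hAC, Matrix.det_fromBlocks_zero₂₁, Matrix.det_smul,
      Matrix.det_one, mul_one, Fintype.card_fin]
  calc A.det * (A.adjugate.submatrix j i).det
      = A.det * C.det := by rw [hdetC]
    _ = (((Equiv.Perm.sign g : ℤ) : R) * ((Equiv.Perm.sign g : ℤ) : R)) * (A.det * C.det) := by
        rw [hsg, one_mul]
    _ = ((Equiv.Perm.sign g : ℤ) : R) * (A.det ^ m * (A.submatrix er ec).det) := by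
        rw [mul_assoc, hmain]

lemma jacobi_adj {R : Type*} [CommRing R] {n m k : ℕ} (hm : 1 ≤ m)
    (A : Matrix (Fin n) (Fin n) R)
    (i j : Fin m → Fin n) (er ec : Fin k → Fin n)
    (eRow eCol : (Fin m ⊕ Fin k) ≃ Fin n)
    (hrow₁ : ∀ s, eRow (Sum.inl s) = i s) (hrow₂ : ∀ r, eRow (Sum.inr r) = er r)
    (hcol₁ : ∀ t, eCol (Sum.inl t) = j t) (hcol₂ : ∀ c, eCol (Sum.inr c) = ec c) :
    (A.adjugate.submatrix j i).det
      = (((Equiv.Perm.sign (eCol.trans eRow.symm) : ℤ) : R))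
          * (A.det ^ (m - 1) * (A.submatrix er ec).det) := by
  classical
  set S := MvPolynomial (Fin n × Fin n) ℤ with hS
  set X : Matrix (Fin n) (Fin n) S := Matrix.mvPolynomialX (Fin n) (Fin n) ℤ with hX
  have hm1 : m - 1 + 1 = m := by omega
  have hgen : (X.adjugate.submatrix j i).det
      = (((Equiv.Perm.sign (eCol.trans eRow.symm) : ℤ) : S))
          * (X.det ^ (m - 1) * (X.submatrix er ec).det) := by
    apply mul_left_cancel₀ (Matrix.det_mvPolynomialX_ne_zero (Fin n) ℤ)
    rw [star_id X i j er ec eRow eCol hrow₁ hrow₂ hcol₁ hcol₂]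
    have hd : X.det ^ m = X.det ^ (m - 1) * X.det := by rw [← pow_succ, hm1]
    rw [hd]
    ring
  set f : S →ₐ[ℤ] R := MvPolynomial.aeval fun p : Fin n × Fin n => A p.1 p.2 with hf
  have hfX : f.mapMatrix X = A := Matrix.mvPolynomialX_mapMatrix_aeval ℤ A
  have e1 : f ((X.adjugate.submatrix j i).det) = (A.adjugate.submatrix j i).det := by
    rw [AlgHom.map_det, AlgHom.mapMatrix_apply, ← Matrix.submatrix_map,
      ← AlgHom.mapMatrix_apply, AlgHom.map_adjugate, hfX]
  have e2 : f X.det = A.det := by rw [AlgHom.map_det, hfX]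
  have e3 : f ((X.submatrix er ec).det) = (A.submatrix er ec).det := by
    rw [AlgHom.map_det, AlgHom.mapMatrix_apply, ← Matrix.submatrix_map,
      ← AlgHom.mapMatrix_apply, hfX]
  have hfinal := congrArg f hgen
  rw [_root_.map_mul, _root_.map_mul, map_pow, e1, e2, e3, map_intCast] at hfinal
  exact hfinal

end JacobiAux

open Equiv Matrix

/-- **Jacobi's Theorem.**  Let `A` be `n × n` over a commutative ring,
`1 ≤ m ≤ n`, and let `i₁ < ⋯ < iₘ`, `j₁ < ⋯ < jₘ` be rows and columns of `A`
(encoded as strictly monotone maps `i j : Fin m → Fin n`).  Let `M'` be the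
`m × m` matrix of cofactors `(−1)^{i_s + j_t} · m(i_s, j_t)` and let `M*` be the
`(n−m) × (n−m)` submatrix of `A` on the complementary rows and columns (encoded
by the strictly monotone enumerations `er`, `ec` of the complements of the
ranges of `i`, `j`).  Then
`det M' = (det A)^{m−1} · det M* · (−1)^{Σ (i_ℓ + j_ℓ)}`. -/
theorem jacobi_theorem {R : Type*} [CommRing R] {n m : ℕ}
    (hm : 1 ≤ m) (hmn : m ≤ n) (A : Matrix (Fin n) (Fin n) R)
    (i j : Fin m → Fin n) (hi : StrictMono i) (hj : StrictMono j)
    (er ec : Fin (n - m) → Fin n) (her : StrictMono er) (hec : StrictMono ec)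
    (hr : ∀ x : Fin n, (∃ r, er r = x) ↔ ∀ s, i s ≠ x)
    (hc : ∀ x : Fin n, (∃ c, ec c = x) ↔ ∀ t, j t ≠ x) :
    (Matrix.of fun s t : Fin m =>
        (-1 : R) ^ ((i s).1 + (j t).1) * dmMinor A (i s) (j t)).det
      = A.det ^ (m - 1) * (A.submatrix er ec).det
          * (-1 : R) ^ (∑ l : Fin m, ((i l).1 + (j l).1)) := by
  classical
  obtain ⟨n', rfl⟩ : ∃ n', n = n' + 1 := ⟨n - 1, by omega⟩
  -- bijections from the complements
  have hbij : ∀ (f : Fin m → Fin (n' + 1)) (g : Fin (n' + 1 - m) → Fin (n' + 1)),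
      StrictMono f → StrictMono g →
      (∀ x, (∃ r, g r = x) ↔ ∀ s, f s ≠ x) → Function.Bijective (Sum.elim f g) := by
    intro f g hf hg hcomp
    constructor
    · rintro (s | r) (s' | r') h <;> simp only [Sum.elim_inl, Sum.elim_inr] at h
      · exact congrArg _ (hf.injective h)
      · exact absurd h ((hcomp (g r')).1 ⟨r', rfl⟩ s)
      · exact absurd h.symm ((hcomp (g r)).1 ⟨r, rfl⟩ s')
      · exact congrArg _ (hg.injective h)
    · intro x
      by_cases hx : ∃ r, g r = x
      · obtain ⟨r, hr0⟩ := hx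
        exact ⟨Sum.inr r, hr0⟩
      · have : ¬ ∀ s, f s ≠ x := fun hh => hx ((hcomp x).2 hh)
        push_neg at this
        obtain ⟨s, hs⟩ := this
        exact ⟨Sum.inl s, hs⟩
  set eRow : (Fin m ⊕ Fin (n' + 1 - m)) ≃ Fin (n' + 1) :=
    Equiv.ofBijective (Sum.elim i er) (hbij i er hi her hr) with heRow
  set eCol : (Fin m ⊕ Fin (n' + 1 - m)) ≃ Fin (n' + 1) :=
    Equiv.ofBijective (Sum.elim j ec) (hbij j ec hj hec hc) with heCol
  have hrow₁ : ∀ s, eRow (Sum.inl s) = i s := fun _ => rfl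
  have hrow₂ : ∀ r, eRow (Sum.inr r) = er r := fun _ => rfl
  have hcol₁ : ∀ t, eCol (Sum.inl t) = j t := fun _ => rfl
  have hcol₂ : ∀ c, eCol (Sum.inr c) = ec c := fun _ => rfl
  -- minors and adjugate
  have hskip : ∀ (a : Fin (n' + 1)) (r : Fin n'), (a.succAbove r).1 = skip a.1 r.1 := by
    intro a r
    unfold skip
    rcases Nat.lt_or_ge r.1 a.1 with h | h
    · rw [Fin.succAbove_of_castSucc_lt _ _ (by rwa [Fin.lt_def])]
      simp [h]
    · rw [Fin.succAbove_of_le_castSucc _ _ (by rw [Fin.le_def]; simpa using h)]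
      simp [Nat.not_lt.2 h]
  have hminor : ∀ a b : Fin (n' + 1),
      dmMinor A a b = (A.submatrix a.succAbove b.succAbove).det := by
    intro a b
    unfold dmMinor
    refine congrArg Matrix.det ?_
    ext r c
    simp only [Matrix.of_apply, Matrix.submatrix_apply]
    congr 1
    · exact Fin.ext (hskip a r).symm
    · exact Fin.ext (hskip b c).symm
  have hM' : (Matrix.of fun s t : Fin m =>
        (-1 : R) ^ ((i s).1 + (j t).1) * dmMinor A (i s) (j t))
      = (A.adjugate.submatrix j i)ᵀ := by
    ext s t
    simp only [Matrix.of_apply, Matrix.transpose_apply, Matrix.submatrix_apply]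
    rw [Matrix.adjugate_fin_succ_eq_det_submatrix, hminor]
  -- the sign
  set u : (Fin m ⊕ Fin (n' + 1 - m)) ≃ Fin (n' + 1) :=
    finSumFinEquiv.trans (finCongr (by omega : m + (n' + 1 - m) = n' + 1)) with hu
  have hu₁ : ∀ s : Fin m, u (Sum.inl s) = ⟨s.1, by have := s.2; omega⟩ := by
    intro s
    apply Fin.ext
    simp [hu, finSumFinEquiv_apply_left]
  have hu₂ : ∀ r : Fin (n' + 1 - m), u (Sum.inr r) = ⟨m + r.1, by have := r.2; omega⟩ := by
    intro r
    apply Fin.ext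
    simp [hu, finSumFinEquiv_apply_right]
  set ρr : Equiv.Perm (Fin (n' + 1)) := u.symm.trans eRow with hρr
  set ρc : Equiv.Perm (Fin (n' + 1)) := u.symm.trans eCol with hρc
  have hρr₁ : ∀ s : Fin m, ρr ⟨s.1, by have := s.2; omega⟩ = i s := by
    intro s
    show eRow (u.symm ⟨s.1, by have := s.2; omega⟩) = i s
    rw [← hu₁ s, Equiv.symm_apply_apply, hrow₁]
  have hρr₂ : ∀ r : Fin (n' + 1 - m), ρr ⟨m + r.1, by have := r.2; omega⟩ = er r := by
    intro r
    show eRow (u.symm ⟨m + r.1, by have := r.2; omega⟩) = er r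
    rw [← hu₂ r, Equiv.symm_apply_apply, hrow₂]
  have hρc₁ : ∀ s : Fin m, ρc ⟨s.1, by have := s.2; omega⟩ = j s := by
    intro s
    show eCol (u.symm ⟨s.1, by have := s.2; omega⟩) = j s
    rw [← hu₁ s, Equiv.symm_apply_apply, hcol₁]
  have hρc₂ : ∀ r : Fin (n' + 1 - m), ρc ⟨m + r.1, by have := r.2; omega⟩ = ec r := by
    intro r
    show eCol (u.symm ⟨m + r.1, by have := r.2; omega⟩) = ec r
    rw [← hu₂ r, Equiv.symm_apply_apply, hcol₂]
  have hsr := JacobiAux.sign_shuffle m (by omega : m + (n' + 1 - m) = n' + 1) i er hi her hr ρr hρr₁ hρr₂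
  have hsc := JacobiAux.sign_shuffle m (by omega : m + (n' + 1 - m) = n' + 1) j ec hj hec hc ρc hρc₁ hρc₂
  have hcc : Equiv.permCongr u (eCol.trans eRow.symm) = ρc.trans ρr.symm :=
    Equiv.ext fun x => rfl
  have hsigng : Equiv.Perm.sign (eCol.trans eRow.symm)
      = (-1 : ℤˣ) ^ (∑ l : Fin m, ((i l).1 + (j l).1)) := by
    have h1 : Equiv.Perm.sign (eCol.trans eRow.symm)
        = Equiv.Perm.sign (ρc.trans ρr.symm) := by
      rw [← hcc, Equiv.Perm.sign_permCongr]
    have h2 : ρc.trans ρr.symm = ρr.symm * ρc := rfl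
    have h3 : Equiv.Perm.sign ρr.symm = Equiv.Perm.sign ρr := Equiv.Perm.sign_symm ρr
    rw [h1, h2, Equiv.Perm.sign_mul, h3, hsr, hsc, ← pow_add]
    have hexp : (∑ l : Fin m, ((i l).1 + l.1)) + (∑ l : Fin m, ((j l).1 + l.1))
        = (∑ l : Fin m, ((i l).1 + (j l).1)) + 2 * (∑ l : Fin m, l.1) := by
      rw [← Finset.sum_add_distrib, Finset.mul_sum, ← Finset.sum_add_distrib]
      exact Finset.sum_congr rfl fun l _ => by ring
    rw [hexp, pow_add, pow_mul]
    norm_num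
  -- put everything together
  rw [hM', Matrix.det_transpose,
    JacobiAux.jacobi_adj hm A i j er ec eRow eCol hrow₁ hrow₂ hcol₁ hcol₂, hsigng]
  have hcast : ((((-1 : ℤˣ) ^ (∑ l : Fin m, ((i l).1 + (j l).1)) : ℤˣ) : ℤ) : R)
      = (-1 : R) ^ (∑ l : Fin m, ((i l).1 + (j l).1)) := by
    push_cast
    ring
  rw [hcast]
  ring
end

section
/- (Sign-free Jacobi identity for minors.) Let A be an n×n matrix over a commutative ring R, let 1 ≤ m ≤ n, and let i_1 < ... < i_m and j_1 < ... < j_m be rows and columns of A. Let N be the m×m matrix whose (s,t) entry is the (i_s, j_t) minor of A, and let M* be the (n−m)×(n−m) submatrix of A obtained by deleting rows i_1, ..., i_m and columns j_1, ..., j_m. Then det(N) = (det A)^{m−1} · det(M*), with no sign correction. -/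
open Matrix in
lemma strictMono_le_apply' {m n : ℕ} {f : Fin m → Fin n} (hf : StrictMono f) (s : Fin m) :
    s.1 ≤ (f s).1 := by
  have : ∀ k, ∀ s : Fin m, s.1 = k → k ≤ (f s).1 := by
    intro k
    induction k with
    | zero => intro s _; omega
    | succ k ih =>
      intro s hs
      have hk : k < m := by omega
      have h1 := ih ⟨k, hk⟩ rfl
      have h2 : f ⟨k, hk⟩ < f s := hf (by rw [Fin.lt_def]; simp; omega)
      rw [Fin.lt_def] at h2
      omega
  exact this s.1 s rfl

lemma strictMono_range_eq {k n : ℕ} (f g : Fin k → Fin n) (hf : StrictMono f)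
    (hg : StrictMono g) (h : ∀ x, (∃ a, f a = x) ↔ ∃ a, g a = x) : f = g := by
  set s : Finset (Fin n) := Finset.univ.image g with hs
  have hcard : s.card = k := by
    rw [hs, Finset.card_image_of_injective _ hg.injective, Finset.card_univ, Fintype.card_fin]
  have hf' : f = s.orderEmbOfFin hcard := by
    refine Finset.orderEmbOfFin_unique hcard (fun x => ?_) hf
    rw [hs, Finset.mem_image]
    obtain ⟨a, ha⟩ := (h (f x)).mp ⟨x, rfl⟩
    exact ⟨a, Finset.mem_univ a, ha⟩
  have hg' : g = s.orderEmbOfFin hcard := by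
    refine Finset.orderEmbOfFin_unique hcard (fun x => ?_) hg
    rw [hs, Finset.mem_image]
    exact ⟨x, Finset.mem_univ x, rfl⟩
  rw [hf', hg']

lemma dmMinor_eq_succAbove {R : Type*} [CommRing R] {n : ℕ}
    (A : Matrix (Fin (n+1)) (Fin (n+1)) R) (x y : Fin (n+1)) :
    dmMinor A x y = (A.submatrix x.succAbove y.succAbove).det := by
  unfold dmMinor
  congr 1
  ext r c
  have hval : ∀ (z : Fin (n+1)) (w : Fin n), (z.succAbove w).1 = skip z.1 w.1 := by
    intro z w
    unfold skip
    rcases lt_or_ge (w.1) (z.1) with h | h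
    · rw [Fin.succAbove_of_castSucc_lt z w (by simpa [Fin.lt_def] using h)]
      simp [h]
    · rw [Fin.succAbove_of_le_castSucc z w (by simpa [Fin.le_def] using h)]
      simp [Nat.not_lt.mpr h]
  show A _ _ = A (x.succAbove r) (y.succAbove c)
  congr 1 <;> exact Fin.ext (by rw [hval]) |>.symm

lemma det_scaled {R : Type*} [CommRing R] {k : ℕ} (u v : Fin k → R)
    (M : Matrix (Fin k) (Fin k) R) :
    (Matrix.of fun r c => u r * M r c * v c).det
      = (∏ r, u r) * (∏ c, v c) * M.det := by
  have h : (Matrix.of fun r c => u r * M r c * v c)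
      = Matrix.diagonal u * M * Matrix.diagonal v := by
    ext r c
    simp [Matrix.mul_diagonal, Matrix.diagonal_mul]
  rw [h, Matrix.det_mul, Matrix.det_mul, Matrix.det_diagonal, Matrix.det_diagonal]
  ring

lemma sign_riffle {n m : ℕ} (hmn : m ≤ n) :
    ∀ (N : ℕ) (i : Fin m → Fin n) (er : Fin (n - m) → Fin n), StrictMono i → StrictMono er →
      (∀ x : Fin n, (∃ r, er r = x) ↔ ∀ s, i s ≠ x) →
      ∀ ρ : Equiv.Perm (Fin n),
        (∀ s : Fin m, ρ ⟨s.1, lt_of_lt_of_le s.2 hmn⟩ = i s) →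
        (∀ c : Fin (n - m), ρ ⟨m + c.1, by omega⟩ = er c) →
        (∑ s : Fin m, ((i s).1 - s.1)) = N →
        Equiv.Perm.sign ρ = (-1) ^ N := by
  intro N
  induction N with
  | zero =>
    intro i er hi her hr ρ hρ1 hρ2 hN
    have his : ∀ s : Fin m, (i s).1 = s.1 := by
      intro s
      have h0 := Finset.sum_eq_zero_iff.mp hN s (Finset.mem_univ s)
      have := strictMono_le_apply' hi s
      omega
    have hg : StrictMono (fun c : Fin (n - m) => (⟨m + c.1, by omega⟩ : Fin n)) := by
      intro a b hab
      rw [Fin.lt_def] at hab ⊢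
      simp only
      omega
    have her' : er = fun c : Fin (n - m) => (⟨m + c.1, by omega⟩ : Fin n) := by
      apply strictMono_range_eq _ _ her hg
      intro x
      rw [hr x]
      constructor
      · intro hx
        have hxm : m ≤ x.1 := by
          by_contra hlt
          push_neg at hlt
          exact hx ⟨x.1, hlt⟩ (Fin.ext (his ⟨x.1, hlt⟩))
        exact ⟨⟨x.1 - m, by omega⟩, Fin.ext (by simp; omega)⟩
      · rintro ⟨a, rfl⟩ s hs
        have := his s
        have := s.2
        have h2 : (i s).1 = m + a.1 := by rw [hs]
        omega
    have hρ : ρ = Equiv.refl (Fin n) := by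
      apply Equiv.ext
      intro x
      rcases lt_or_ge x.1 m with h | h
      · have h1 := hρ1 ⟨x.1, h⟩
        have hxx : (⟨x.1, lt_of_lt_of_le h hmn⟩ : Fin n) = x := Fin.ext rfl
        rw [hxx] at h1
        rw [h1]
        exact Fin.ext (his ⟨x.1, h⟩)
      · set c : Fin (n - m) := ⟨x.1 - m, by omega⟩ with hc
        have h1 := hρ2 c
        have hxx : (⟨m + c.1, by omega⟩ : Fin n) = x := Fin.ext (by simp [hc]; omega)
        rw [hxx] at h1
        rw [h1, her']
        exact Fin.ext (by simp [hc]; omega)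
    rw [hρ]
    simp
  | succ N ih =>
    intro i er hi her hr ρ hρ1 hρ2 hN
    classical
    have hexF : (Finset.univ.filter (fun s : Fin m => (i s).1 ≠ s.1)).Nonempty := by
      by_contra hno
      rw [Finset.not_nonempty_iff_eq_empty, Finset.filter_eq_empty_iff] at hno
      have hz : ∑ s : Fin m, ((i s).1 - s.1) = 0 := by
        apply Finset.sum_eq_zero
        intro s _
        have h1 := hno (Finset.mem_univ s)
        have h2 : (i s).1 = s.1 := by
          by_contra h3
          exact h1 h3
        omega
      omega
    set s0 := (Finset.univ.filter (fun s : Fin m => (i s).1 ≠ s.1)).min' hexF with hs0def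
    have ht0 : (i s0).1 ≠ s0.1 := by
      have h1 := Finset.min'_mem (Finset.univ.filter (fun s : Fin m => (i s).1 ≠ s.1)) hexF
      rw [Finset.mem_filter] at h1
      exact h1.2
    have hlow : ∀ s : Fin m, s < s0 → (i s).1 = s.1 := by
      intro s hs
      by_contra hne
      have hmem : s ∈ Finset.univ.filter (fun s : Fin m => (i s).1 ≠ s.1) :=
        Finset.mem_filter.mpr ⟨Finset.mem_univ s, hne⟩
      exact absurd (Finset.min'_le _ s hmem) (not_le.mpr hs)
    have hgt : s0.1 < (i s0).1 := by
      have := strictMono_le_apply' hi s0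
      omega
    have hk_lt : (i s0).1 - 1 < n := by have := (i s0).2; omega
    set k : Fin n := ⟨(i s0).1 - 1, hk_lt⟩ with hkdef
    have hkval : (i s0).1 = k.1 + 1 := by simp [hkdef]; omega
    have hs0k : s0.1 ≤ k.1 := by simp [hkdef]; omega
    have hknotin : ∀ s, i s ≠ k := by
      intro s hsk
      have hv : (i s).1 = k.1 := by rw [hsk]
      rcases lt_trichotomy s s0 with h | h | h
      · have h1 := hlow s h
        rw [Fin.lt_def] at h
        omega
      · rw [h] at hv
        omega
      · have h1 : i s0 < i s := hi h
        rw [Fin.lt_def] at h1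
        omega
    obtain ⟨c0, hc0⟩ := (hr k).mpr hknotin
    have hc0v : (er c0).1 = k.1 := by rw [hc0]
    set i' : Fin m → Fin n := Function.update i s0 k with hi'def
    set er' : Fin (n - m) → Fin n := Function.update er c0 (i s0) with her'def
    have hi'app : ∀ s, i' s = if s = s0 then k else i s := fun s => Function.update_apply i s0 k s
    have her'app : ∀ c, er' c = if c = c0 then i s0 else er c :=
      fun c => Function.update_apply er c0 (i s0) c
    have hernek : ∀ c, c ≠ c0 → er c ≠ k := by
      intro c hc hek
      exact hc (her.injective (hek.trans hc0.symm))
    have herne : ∀ c, er c ≠ i s0 := fun c hcc => (hr (i s0)).mp ⟨c, hcc⟩ s0 rfl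
    have hi' : StrictMono i' := by
      intro a b hab
      rw [hi'app, hi'app, Fin.lt_def]
      by_cases ha : a = s0
      · rw [if_pos ha, if_neg (by rintro rfl; exact absurd (ha ▸ hab) (lt_irrefl _))]
        have h1 : i s0 < i b := hi (ha ▸ hab)
        rw [Fin.lt_def] at h1
        omega
      · rw [if_neg ha]
        by_cases hb : b = s0
        · rw [if_pos hb]
          have hab' : a < s0 := hb ▸ hab
          have h1 := hlow a hab'
          rw [Fin.lt_def] at hab'
          omega
        · rw [if_neg hb]
          exact hi hab
    have her'm : StrictMono er' := by
      intro a b hab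
      rw [her'app, her'app, Fin.lt_def]
      by_cases ha : a = c0
      · rw [if_pos ha, if_neg (by rintro rfl; exact absurd (ha ▸ hab) (lt_irrefl _))]
        have h1 : er c0 < er b := her (ha ▸ hab)
        rw [Fin.lt_def] at h1
        have h2 := hernek b (by rintro rfl; exact absurd (ha ▸ hab) (lt_irrefl _))
        have h3 := herne b
        have h4 : (er b).1 ≠ k.1 + 1 := fun hh => h3 (Fin.ext (by omega))
        have h5 : (er b).1 ≠ k.1 := fun hh => h2 (Fin.ext hh)
        omega
      · rw [if_neg ha]
        by_cases hb : b = c0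
        · rw [if_pos hb]
          have hab' : a < c0 := hb ▸ hab
          have h1 : er a < er c0 := her hab'
          rw [Fin.lt_def] at h1
          omega
        · rw [if_neg hb]
          exact her hab
    have hr' : ∀ x : Fin n, (∃ c, er' c = x) ↔ ∀ s, i' s ≠ x := by
      intro x
      constructor
      · rintro ⟨c, hcx⟩ s hsx
        rw [her'app] at hcx
        rw [hi'app] at hsx
        by_cases hcc : c = c0 <;> by_cases hss : s = s0
        · rw [if_pos hcc] at hcx; rw [if_pos hss] at hsx
          have : (i s0).1 = k.1 := by rw [hcx, ← hsx]
          omega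
        · rw [if_pos hcc] at hcx; rw [if_neg hss] at hsx
          exact hss (hi.injective (hsx.trans hcx.symm))
        · rw [if_neg hcc] at hcx; rw [if_pos hss] at hsx
          exact hernek c hcc (hcx.trans hsx.symm)
        · rw [if_neg hcc] at hcx; rw [if_neg hss] at hsx
          exact (hr x).mp ⟨c, hcx⟩ s hsx
      · intro hall
        by_cases hx1 : x = i s0
        · exact ⟨c0, by rw [her'app, if_pos rfl, hx1]⟩
        · have hxk : x ≠ k := by
            intro h
            exact hall s0 (by rw [hi'app, if_pos rfl, h])
          have hnotin : ∀ s, i s ≠ x := by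
            intro s hsx
            by_cases hss : s = s0
            · exact hx1 (by rw [← hsx, hss])
            · exact hall s (by rw [hi'app, if_neg hss]; exact hsx)
          obtain ⟨c, hc⟩ := (hr x).mpr hnotin
          have hcc : c ≠ c0 := by
            rintro rfl
            exact hxk (hc.symm.trans hc0)
          exact ⟨c, by rw [her'app, if_neg hcc]; exact hc⟩
    have hsum' : ∑ s : Fin m, ((i' s).1 - s.1) = N := by
      have e1 := Finset.add_sum_erase Finset.univ (fun s : Fin m => (i' s).1 - s.1)
        (Finset.mem_univ s0)
      have e2 := Finset.add_sum_erase Finset.univ (fun s : Fin m => (i s).1 - s.1)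
        (Finset.mem_univ s0)
      have e3 : ∑ s ∈ Finset.univ.erase s0, ((i' s).1 - s.1)
          = ∑ s ∈ Finset.univ.erase s0, ((i s).1 - s.1) := by
        apply Finset.sum_congr rfl
        intro s hs
        rw [hi'app, if_neg (Finset.ne_of_mem_erase hs)]
      have e4 : (i' s0).1 = k.1 := by rw [hi'app, if_pos rfl]
      omega
    set k1 : Fin n := ⟨k.1 + 1, by omega⟩ with hk1def
    have hik1 : i s0 = k1 := Fin.ext (by rw [hkval])
    have hkne : k ≠ k1 := by
      intro h
      have : k.1 = k.1 + 1 := congrArg Fin.val h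
      omega
    set ρ' : Equiv.Perm (Fin n) := ρ.trans (Equiv.swap k k1) with hρ'def
    have hρ'1 : ∀ s : Fin m, ρ' ⟨s.1, lt_of_lt_of_le s.2 hmn⟩ = i' s := by
      intro s
      rw [hρ'def]
      simp only [Equiv.trans_apply]
      rw [hρ1 s, hi'app]
      by_cases hss : s = s0
      · rw [if_pos hss, hss, hik1, Equiv.swap_apply_right]
      · rw [if_neg hss]
        apply Equiv.swap_apply_of_ne_of_ne (hknotin s)
        rw [← hik1]
        exact fun h => hss (hi.injective h)
    have hρ'2 : ∀ c : Fin (n - m), ρ' ⟨m + c.1, by omega⟩ = er' c := by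
      intro c
      rw [hρ'def]
      simp only [Equiv.trans_apply]
      rw [hρ2 c, her'app]
      by_cases hcc : c = c0
      · rw [if_pos hcc, hcc, hc0, Equiv.swap_apply_left, ← hik1]
      · rw [if_neg hcc]
        apply Equiv.swap_apply_of_ne_of_ne (hernek c hcc)
        rw [← hik1]
        exact herne c
    have hIH := ih i' er' hi' her'm hr' ρ' hρ'1 hρ'2 hsum'
    have hsign : Equiv.Perm.sign ρ' = -Equiv.Perm.sign ρ := by
      rw [hρ'def, ← Equiv.Perm.mul_def (Equiv.swap k k1) ρ, _root_.map_mul,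
        Equiv.Perm.sign_swap hkne]
      simp
    rw [pow_succ]
    rw [← hIH, hsign]
    simp

lemma adjugate_DAD {R : Type*} [CommRing R] {n : ℕ}
    (A : Matrix (Fin (n+1)) (Fin (n+1)) R) (x y : Fin (n+1)) :
    Matrix.adjugate
        (Matrix.diagonal (fun z : Fin (n+1) => (-1 : R)^z.1) * A
          * Matrix.diagonal (fun z : Fin (n+1) => (-1 : R)^z.1)) x y
      = dmMinor A y x := by
  set D := Matrix.diagonal (fun z : Fin (n+1) => (-1 : R)^z.1) with hD
  have hB : ∀ a b, (D * A * D) a b = (-1 : R)^a.1 * A a b * (-1 : R)^b.1 := by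
    intro a b
    rw [Matrix.mul_diagonal, Matrix.diagonal_mul]
  rw [Matrix.adjugate_fin_succ_eq_det_submatrix]
  have hsub : (D * A * D).submatrix y.succAbove x.succAbove
      = Matrix.of fun r c => (-1 : R)^(y.succAbove r).1
          * (A.submatrix y.succAbove x.succAbove) r c * (-1 : R)^(x.succAbove c).1 := by
    ext r c
    rw [Matrix.submatrix_apply, hB]
    rfl
  rw [hsub, det_scaled]
  rw [Finset.prod_pow_eq_pow_sum, Finset.prod_pow_eq_pow_sum]
  have hsumy : (∑ r : Fin n, (y.succAbove r).1) + y.1 = ∑ w : Fin (n+1), w.1 := by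
    rw [Fin.sum_univ_succAbove (fun w : Fin (n+1) => w.1) y]
    omega
  have hsumx : (∑ c : Fin n, (x.succAbove c).1) + x.1 = ∑ w : Fin (n+1), w.1 := by
    rw [Fin.sum_univ_succAbove (fun w : Fin (n+1) => w.1) x]
    omega
  rw [dmMinor_eq_succAbove]
  set T := ∑ w : Fin (n+1), w.1
  set Sy := ∑ r : Fin n, (y.succAbove r).1
  set Sx := ∑ c : Fin n, (x.succAbove c).1
  have hcomb : ((-1 : R) ^ (y.1 + x.1)) * ((-1 : R) ^ Sy * (-1 : R) ^ Sx
      * (A.submatrix y.succAbove x.succAbove).det)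
      = (A.submatrix y.succAbove x.succAbove).det := by
    rw [← mul_assoc, ← mul_assoc, ← pow_add, ← pow_add]
    have he : y.1 + x.1 + Sy + Sx = 2 * T := by omega
    rw [he, pow_mul]
    simp
  exact hcomb

lemma jacobi_mul {R : Type*} [CommRing R] {n m : ℕ}
    (hm : 1 ≤ m) (hmn : m ≤ n) (A : Matrix (Fin n) (Fin n) R)
    (i j : Fin m → Fin n) (hi : StrictMono i) (hj : StrictMono j)
    (er ec : Fin (n - m) → Fin n) (her : StrictMono er) (hec : StrictMono ec)
    (hr : ∀ x : Fin n, (∃ r, er r = x) ↔ ∀ s, i s ≠ x)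
    (hc : ∀ x : Fin n, (∃ c, ec c = x) ↔ ∀ t, j t ≠ x) :
    A.det * (Matrix.of fun s t : Fin m => dmMinor A (i s) (j t)).det
      = A.det ^ m * (A.submatrix er ec).det := by
  obtain ⟨n', rfl⟩ : ∃ n', n = n' + 1 := ⟨n - 1, by omega⟩
  set D := Matrix.diagonal (fun z : Fin (n' + 1) => (-1 : R)^z.1) with hD
  set B := D * A * D with hBdef
  have hBapp : ∀ a b, B a b = (-1 : R)^a.1 * A a b * (-1 : R)^b.1 := by
    intro a b
    rw [hBdef, Matrix.mul_diagonal, Matrix.diagonal_mul]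
  -- bijections
  have hRb : Function.Bijective (Sum.elim i er) := by
    constructor
    · rintro (s | c) (s' | c') hab
      · rw [hi.injective hab]
      · exact absurd hab (by simp; exact fun h => (hr (i s)).mp ⟨c', h.symm⟩ s rfl)
      · exact absurd hab (by simp; exact fun h => (hr (i s')).mp ⟨c, h⟩ s' rfl)
      · rw [her.injective hab]
    · intro x
      by_cases h : ∃ s, i s = x
      · obtain ⟨s, hs⟩ := h; exact ⟨Sum.inl s, hs⟩
      · push_neg at h
        obtain ⟨c, hcx⟩ := (hr x).mpr h
        exact ⟨Sum.inr c, hcx⟩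
  have hCb : Function.Bijective (Sum.elim j ec) := by
    constructor
    · rintro (t | c) (t' | c') hab
      · rw [hj.injective hab]
      · exact absurd hab (by simp; exact fun h => (hc (j t)).mp ⟨c', h.symm⟩ t rfl)
      · exact absurd hab (by simp; exact fun h => (hc (j t')).mp ⟨c, h⟩ t' rfl)
      · rw [hec.injective hab]
    · intro x
      by_cases h : ∃ t, j t = x
      · obtain ⟨t, ht⟩ := h; exact ⟨Sum.inl t, ht⟩
      · push_neg at h
        obtain ⟨c, hcx⟩ := (hc x).mpr h
        exact ⟨Sum.inr c, hcx⟩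
  set Rν : (Fin m ⊕ Fin ((n' + 1) - m)) ≃ Fin (n' + 1) := Equiv.ofBijective _ hRb with hRνdef
  set Cν : (Fin m ⊕ Fin ((n' + 1) - m)) ≃ Fin (n' + 1) := Equiv.ofBijective _ hCb with hCνdef
  have hRl : ∀ s, Rν (Sum.inl s) = i s := fun s => rfl
  have hRr : ∀ c, Rν (Sum.inr c) = er c := fun c => rfl
  have hCl : ∀ t, Cν (Sum.inl t) = j t := fun t => rfl
  have hCr : ∀ c, Cν (Sum.inr c) = ec c := fun c => rfl
  -- the auxiliary matrix
  set CM : Matrix (Fin (n' + 1)) (Fin (n' + 1)) R := Matrix.of fun x y =>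
    Sum.elim (fun t => Matrix.adjugate B x (i t)) (fun c => if x = ec c then (1:R) else 0)
      (Cν.symm y) with hCMdef
  have hCM1 : ∀ (x : Fin (n' + 1)) (t : Fin m), CM x (Cν (Sum.inl t)) = Matrix.adjugate B x (i t) := by
    intro x t
    rw [hCMdef, Matrix.of_apply, Equiv.symm_apply_apply, Sum.elim_inl]
  have hCM2 : ∀ (x : Fin (n' + 1)) (c : Fin ((n' + 1) - m)),
      CM x (Cν (Sum.inr c)) = if x = ec c then (1:R) else 0 := by
    intro x c
    rw [hCMdef, Matrix.of_apply, Equiv.symm_apply_apply, Sum.elim_inr]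
  have hBC1 : ∀ (x : Fin (n' + 1)) (t : Fin m),
      (B * CM) x (Cν (Sum.inl t)) = B.det * (if x = i t then (1:R) else 0) := by
    intro x t
    rw [Matrix.mul_apply]
    simp_rw [hCM1]
    rw [show (∑ y', B x y' * Matrix.adjugate B y' (i t)) = (B * Matrix.adjugate B) x (i t) from
      (Matrix.mul_apply).symm]
    rw [Matrix.mul_adjugate, Matrix.smul_apply, Matrix.one_apply, smul_eq_mul]
  have hBC2 : ∀ (x : Fin (n' + 1)) (c : Fin ((n' + 1) - m)),
      (B * CM) x (Cν (Sum.inr c)) = B x (ec c) := by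
    intro x c
    rw [Matrix.mul_apply]
    simp_rw [hCM2]
    simp [mul_ite, mul_one, mul_zero]
  -- block forms
  have h2 : CM.submatrix ⇑Cν ⇑Cν
      = Matrix.fromBlocks (Matrix.of fun t' t : Fin m => dmMinor A (i t) (j t')) 0
          (Matrix.of fun (c' : Fin ((n' + 1) - m)) (t : Fin m) => Matrix.adjugate B (ec c') (i t))
          (1 : Matrix (Fin ((n' + 1) - m)) (Fin ((n' + 1) - m)) R) := by
    ext r z
    rcases r with t' | c' <;> rcases z with t | c
    · show CM (Cν (Sum.inl t')) (Cν (Sum.inl t)) = dmMinor A (i t) (j t')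
      rw [hCM1, hCl]
      exact adjugate_DAD A (j t') (i t)
    · show CM (Cν (Sum.inl t')) (Cν (Sum.inr c)) = 0
      rw [hCM2, hCl, if_neg (fun h => (hc (j t')).mp ⟨c, h.symm⟩ t' rfl)]
    · show CM (Cν (Sum.inr c')) (Cν (Sum.inl t)) = Matrix.adjugate B (ec c') (i t)
      rw [hCM1, hCr]
    · show CM (Cν (Sum.inr c')) (Cν (Sum.inr c))
        = (1 : Matrix (Fin ((n' + 1) - m)) (Fin ((n' + 1) - m)) R) c' c
      rw [hCM2, hCr, Matrix.one_apply]
      simp [hec.injective.eq_iff]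
  have h1 : (B * CM).submatrix ⇑Rν ⇑Cν
      = Matrix.fromBlocks (B.det • (1 : Matrix (Fin m) (Fin m) R))
          (Matrix.of fun (s : Fin m) (c : Fin ((n' + 1) - m)) => B (i s) (ec c)) 0
          (B.submatrix er ec) := by
    ext r z
    rcases r with s | c' <;> rcases z with t | c
    · show (B * CM) (Rν (Sum.inl s)) (Cν (Sum.inl t))
        = (B.det • (1 : Matrix (Fin m) (Fin m) R)) s t
      rw [hRl, hBC1, Matrix.smul_apply, Matrix.one_apply, smul_eq_mul]
      simp [hi.injective.eq_iff]
    · show (B * CM) (Rν (Sum.inl s)) (Cν (Sum.inr c)) = B (i s) (ec c)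
      rw [hRl, hBC2]
    · show (B * CM) (Rν (Sum.inr c')) (Cν (Sum.inl t)) = 0
      rw [hRr, hBC1, if_neg (fun h => (hr (i t)).mp ⟨c', h⟩ t rfl), mul_zero]
    · show (B * CM) (Rν (Sum.inr c')) (Cν (Sum.inr c)) = B (er c') (ec c)
      rw [hRr, hBC2]
  -- determinant of CM
  have hNt : (Matrix.of fun t' t : Fin m => dmMinor A (i t) (j t'))
      = (Matrix.of fun s t : Fin m => dmMinor A (i s) (j t)).transpose := by
    ext t' t
    rw [Matrix.transpose_apply]
    rfl
  have hdetCM : CM.det = (Matrix.of fun s t : Fin m => dmMinor A (i s) (j t)).det := by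
    rw [← Matrix.det_submatrix_equiv_self Cν CM, h2, Matrix.det_fromBlocks_zero₁₂,
      Matrix.det_one, mul_one, hNt, Matrix.det_transpose]
  -- permutation τ
  set τ : Equiv.Perm (Fin m ⊕ Fin ((n' + 1) - m)) := Cν.trans Rν.symm with hτdef
  have hcols : (B * CM).submatrix ⇑Rν ⇑Cν = ((B * CM).submatrix ⇑Rν ⇑Rν).submatrix id ⇑τ := by
    ext r z
    simp [hτdef, Matrix.submatrix_apply, Equiv.apply_symm_apply]
  have hdetBC : ((B * CM).submatrix ⇑Rν ⇑Cν).det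
      = (Equiv.Perm.sign τ : ℤ) * (B * CM).det := by
    rw [hcols, Matrix.det_permute', Matrix.det_submatrix_equiv_self]
  -- determinant of the block matrix
  have hdetblocks : ((B * CM).submatrix ⇑Rν ⇑Cν).det = B.det ^ m * (B.submatrix er ec).det := by
    rw [h1, Matrix.det_fromBlocks_zero₂₁, Matrix.det_smul, Matrix.det_one, mul_one,
      Fintype.card_fin]
  -- det B = det A
  set T := ∑ w : Fin (n' + 1), w.1 with hT
  have hdd : ((-1 : R) ^ T) * ((-1 : R) ^ T) = 1 := by
    rw [← pow_add, show T + T = 2 * T by omega, pow_mul]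
    simp
  have hdetD : D.det = (-1 : R) ^ T := by
    rw [hD, Matrix.det_diagonal, Finset.prod_pow_eq_pow_sum]
  have hdetB : B.det = A.det := by
    rw [hBdef, Matrix.det_mul, Matrix.det_mul, hdetD]
    calc (-1 : R) ^ T * A.det * (-1 : R) ^ T
        = ((-1 : R) ^ T * (-1 : R) ^ T) * A.det := by ring
      _ = A.det := by rw [hdd, one_mul]
  -- det of B.submatrix er ec
  set Er := ∑ c' : Fin ((n' + 1) - m), (er c').1 with hEr
  set Ec := ∑ c : Fin ((n' + 1) - m), (ec c).1 with hEc
  have hsubB : B.submatrix er ec = Matrix.of fun c' c =>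
      ((-1 : R) ^ (er c').1) * (A.submatrix er ec) c' c * ((-1 : R) ^ (ec c).1) := by
    ext c' c
    rw [Matrix.submatrix_apply, hBapp]
    rfl
  have hdetsubB : (B.submatrix er ec).det
      = (-1 : R) ^ Er * ((-1 : R) ^ Ec * (A.submatrix er ec).det) := by
    rw [hsubB, det_scaled, Finset.prod_pow_eq_pow_sum, Finset.prod_pow_eq_pow_sum]
    ring
  -- sign computations
  set e : (Fin m ⊕ Fin ((n' + 1) - m)) ≃ Fin (n' + 1) :=
    finSumFinEquiv.trans (finCongr (by omega : m + ((n' + 1) - m) = (n' + 1))) with hedef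
  have he1 : ∀ s : Fin m, e (Sum.inl s) = (⟨s.1, lt_of_lt_of_le s.2 hmn⟩ : Fin (n' + 1)) := by
    intro s
    apply Fin.ext
    simp [hedef]
  have he2 : ∀ c : Fin ((n' + 1) - m), e (Sum.inr c) = (⟨m + c.1, by omega⟩ : Fin (n' + 1)) := by
    intro c
    apply Fin.ext
    simp [hedef]
  set ρR : Equiv.Perm (Fin (n' + 1)) := e.symm.trans Rν with hρRdef
  set ρC : Equiv.Perm (Fin (n' + 1)) := e.symm.trans Cν with hρCdef
  set Fr := ∑ s : Fin m, ((i s).1 - s.1) with hFr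
  set Fc := ∑ t : Fin m, ((j t).1 - t.1) with hFc
  have hsignR : Equiv.Perm.sign ρR = (-1) ^ Fr := by
    apply sign_riffle hmn Fr i er hi her hr
    · intro s
      rw [hρRdef, Equiv.trans_apply, ← he1, Equiv.symm_apply_apply, hRl]
    · intro c
      rw [hρRdef, Equiv.trans_apply, ← he2, Equiv.symm_apply_apply, hRr]
    · rfl
  have hsignC : Equiv.Perm.sign ρC = (-1) ^ Fc := by
    apply sign_riffle hmn Fc j ec hj hec hc
    · intro t
      rw [hρCdef, Equiv.trans_apply, ← he1, Equiv.symm_apply_apply, hCl]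
    · intro c
      rw [hρCdef, Equiv.trans_apply, ← he2, Equiv.symm_apply_apply, hCr]
    · rfl
  have hτsplit : τ = (Cν.trans e.symm).trans (e.trans Rν.symm) := by
    apply Equiv.ext
    intro z
    simp [hτdef, Equiv.trans_apply]
  have hσC : (Cν.trans e.symm) = ((e.symm).symm.trans ρC).trans e.symm := by
    apply Equiv.ext
    intro z
    simp [hρCdef, Equiv.trans_apply]
  have hσR : (e.trans Rν.symm) = ((e.symm).symm.trans ρR.symm).trans e.symm := by
    apply Equiv.ext
    intro z
    simp [hρRdef, Equiv.trans_apply]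
  have hsignτ : Equiv.Perm.sign τ = (-1) ^ (Fr + Fc) := by
    rw [hτsplit, ← Equiv.Perm.mul_def (e.trans Rν.symm) (Cν.trans e.symm), _root_.map_mul]
    rw [hσC, hσR, Equiv.Perm.sign_symm_trans_trans, Equiv.Perm.sign_symm_trans_trans]
    rw [show ρR.symm = ρR⁻¹ from rfl, Equiv.Perm.sign_inv, hsignR, hsignC, ← pow_add,
      Nat.add_comm Fr Fc]
  -- combine everything
  have hmain : ((Equiv.Perm.sign τ : ℤ) : R) * (A.det * (Matrix.of fun s t : Fin m =>
      dmMinor A (i s) (j t)).det) = A.det ^ m * (B.submatrix er ec).det := by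
    rw [← hdetB, ← hdetCM, ← Matrix.det_mul, ← hdetBC, hdetblocks, hdetB]
  -- eve(n' + 1)ess
  have hKr : Fr + (∑ s : Fin m, s.1) = ∑ s : Fin m, (i s).1 := by
    rw [hFr, ← Finset.sum_add_distrib]
    apply Finset.sum_congr rfl
    intro s _
    rw [Nat.sub_add_cancel (strictMono_le_apply' hi s)]
  have hKc : Fc + (∑ t : Fin m, t.1) = ∑ t : Fin m, (j t).1 := by
    rw [hFc, ← Finset.sum_add_distrib]
    apply Finset.sum_congr rfl
    intro t _
    rw [Nat.sub_add_cancel (strictMono_le_apply' hj t)]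
  have hTr : (∑ s : Fin m, (i s).1) + Er = T := by
    rw [hT, ← Equiv.sum_comp Rν (fun w : Fin (n' + 1) => w.1), Fintype.sum_sum_type]
    rfl
  have hTc : (∑ t : Fin m, (j t).1) + Ec = T := by
    rw [hT, ← Equiv.sum_comp Cν (fun w : Fin (n' + 1) => w.1), Fintype.sum_sum_type]
    rfl
  have heven : Fr + Fc + (Er + Ec) = 2 * (T - (∑ s : Fin m, s.1)) := by omega
  have hsign1 : ((Equiv.Perm.sign τ : ℤ) : R) * ((-1 : R) ^ Er * (-1 : R) ^ Ec) = 1 := by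
    rw [hsignτ]
    push_cast
    rw [← pow_add, ← pow_add, heven, pow_mul]
    simp
  -- finish
  have hfinal := congrArg (fun x => ((Equiv.Perm.sign τ : ℤ) : R) * x) hmain
  rw [← mul_assoc, show ((Equiv.Perm.sign τ : ℤ) : R) * ((Equiv.Perm.sign τ : ℤ) : R)
    = 1 by rw [← Int.cast_mul, ← Units.val_mul, Int.units_mul_self]; simp, one_mul] at hfinal
  rw [hfinal, hdetsubB]
  calc ((Equiv.Perm.sign τ : ℤ) : R) * (A.det ^ m
        * ((-1 : R) ^ Er * ((-1 : R) ^ Ec * (A.submatrix er ec).det)))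
      = (((Equiv.Perm.sign τ : ℤ) : R) * ((-1 : R) ^ Er * (-1 : R) ^ Ec))
        * (A.det ^ m * (A.submatrix er ec).det) := by ring
    _ = A.det ^ m * (A.submatrix er ec).det := by rw [hsign1, one_mul]

lemma dmMinor_map {R S : Type*} [CommRing R] [CommRing S] (f : R →+* S) {n : ℕ}
    (M : Matrix (Fin n) (Fin n) R) (x y : Fin n) :
    f (dmMinor M x y) = dmMinor (M.map f) x y := by
  unfold dmMinor
  rw [RingHom.map_det]
  congr 1

/-- **Sign-free Jacobi identity for minors.**  Let `A` be `n × n` over a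
commutative ring, `1 ≤ m ≤ n`, and let `i₁ < ⋯ < iₘ`, `j₁ < ⋯ < jₘ` be rows and
columns of `A`.  Let `N` be the `m × m` matrix of unsigned minors
`m(i_s, j_t)` and let `M*` be the `(n−m) × (n−m)` submatrix of `A` on the
complementary rows and columns (encoded by the strictly monotone enumerations
`er`, `ec` of the complements of the ranges of `i`, `j`).  Then
`det N = (det A)^{m−1} · det M*`, with no sign correction. -/
theorem jacobi_sign_free {R : Type*} [CommRing R] {n m : ℕ}
    (hm : 1 ≤ m) (hmn : m ≤ n) (A : Matrix (Fin n) (Fin n) R)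
    (i j : Fin m → Fin n) (hi : StrictMono i) (hj : StrictMono j)
    (er ec : Fin (n - m) → Fin n) (her : StrictMono er) (hec : StrictMono ec)
    (hr : ∀ x : Fin n, (∃ r, er r = x) ↔ ∀ s, i s ≠ x)
    (hc : ∀ x : Fin n, (∃ c, ec c = x) ↔ ∀ t, j t ≠ x) :
    (Matrix.of fun s t : Fin m => dmMinor A (i s) (j t)).det
      = A.det ^ (m - 1) * (A.submatrix er ec).det := by
  classical
  set M : Matrix (Fin n) (Fin n) (Polynomial R) :=
    Matrix.diagonal (fun _ => (Polynomial.X : Polynomial R)) + A.map Polynomial.C with hM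
  have hMchar : M = Matrix.charmatrix (-A) := by
    ext a b
    by_cases hab : a = b
    · subst hab
      rw [Matrix.charmatrix_apply_eq]
      simp [hM, Matrix.map_apply, sub_neg_eq_add]
    · rw [Matrix.charmatrix_apply_ne _ _ _ hab]
      simp [hM, Matrix.diagonal_apply_ne _ hab, Matrix.map_apply]
  have hmonic : M.det.Monic := by
    rw [hMchar]
    exact Matrix.charpoly_monic (-A)
  have hjac := jacobi_mul hm hmn M i j hi hj er ec her hec hr hc
  have hpow : M.det ^ m = M.det ^ (m - 1) * M.det := by
    conv_lhs => rw [show m = (m - 1) + 1 by omega]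
    rw [pow_succ]
  rw [hpow] at hjac
  have hcancel : (Matrix.of fun s t : Fin m => dmMinor M (i s) (j t)).det
      = M.det ^ (m - 1) * (M.submatrix er ec).det := by
    apply hmonic.isRegular.left
    show M.det * _ = M.det * _
    rw [hjac]
    ring
  set ψ : Polynomial R →+* R := Polynomial.evalRingHom (0 : R) with hψ
  have hMA : M.map ψ = A := by
    ext a b
    by_cases hab : a = b
    · subst hab
      simp [hM, hψ, Matrix.map_apply]
    · simp [hM, hψ, Matrix.map_apply, Matrix.diagonal_apply_ne _ hab]
  have hNA : (Matrix.of fun s t : Fin m => dmMinor A (i s) (j t))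
      = (Matrix.of fun s t : Fin m => dmMinor M (i s) (j t)).map ψ := by
    ext s t
    rw [Matrix.map_apply, Matrix.of_apply, Matrix.of_apply, dmMinor_map ψ M, hMA]
  rw [hNA, ← RingHom.mapMatrix_apply, ← RingHom.map_det, hcancel, _root_.map_mul, _root_.map_pow]
  congr 1
  · congr 1
    rw [RingHom.map_det, RingHom.mapMatrix_apply, hMA]
  · rw [RingHom.map_det, RingHom.mapMatrix_apply]
    congr 1
    rw [← hMA]
    ext c' c
    simp [Matrix.map_apply, Matrix.submatrix_apply]
end
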